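/- Let 𝒴 be a finite linearly ordered set and let Q, Q' : 𝒴 → (0,1] be strictly positive probability mass functions on 𝒴. Let m > 0 and define A(y) = e^{m·(Q(≤y) − 1)} − e^{m·(Q(<y) − 1)} and A'(y) = e^{m·(Q'(≤y) − 1)} − e^{m·(Q'(<y) − 1)} (the selection algorithm with K ∼ Poisson(m)). Let δ : ℝ → [0,∞) be such that for every s ∈ ℝ both ∑_y max(Q(y) − e^s Q'(y), 0) ≤ δ(s) and ∑_y max(Q'(y) − e^s Q(y), 0) ≤ δ(s). Then for every ε > 0 and every ε₁ ≥ 0: ∑_{y∈𝒴} max(A(y) − e^ε·A'(y), 0) ≤ m · δ(ε̂), where ε̂ = ε − m·(e^{ε₁} − 1) − m·δ(ε₁). -/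

import Mathlib

/-!
Write `φ(z) = e^{m(z-1)}`, so that `A(y) = φ(Q(≤y)) - φ(Q(<y))`. Move the cumulative masses
linearly, `U_t = Q(<y) + t Q(y)` and `V_t = Q'(<y) + t Q'(y)` for `t ∈ [0,1]`; then
`A(y) - e^ε A'(y)` is the increment of `φ(U_t) - e^ε φ(V_t)`, whose derivative is
`φ'(U_t) Q(y) - e^ε φ'(V_t) Q'(y)`. Since `U_t - V_t ≤ D = (e^{ε₁} - 1) + δ(ε₁)`, we have
`φ'(V_t) ≥ e^{-mD} φ'(U_t)`, and since `φ'(U_t) ≤ m` the derivative is at most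
`m · max(Q(y) - e^{ε - mD} Q'(y), 0)`. By the mean value theorem so is the increment;
summing over `y` and applying the privacy profile at `ε̂ = ε - mD` gives the claim.
-/

open Finset Real

/-- Cumulative mass `Q(≤ y)` of a pmf on a finite linearly ordered set. -/
noncomputable def cumLE {Y : Type*} [Fintype Y] [LinearOrder Y] (Q : Y → ℝ) (y : Y) : ℝ :=
  ∑ z ∈ Finset.univ.filter (fun z => z ≤ y), Q z

/-- Cumulative mass `Q(< y)` of a pmf on a finite linearly ordered set. -/
noncomputable def cumLT {Y : Type*} [Fintype Y] [LinearOrder Y] (Q : Y → ℝ) (y : Y) : ℝ :=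
  ∑ z ∈ Finset.univ.filter (fun z => z < y), Q z

noncomputable def poissonPGF (m z : ℝ) : ℝ := exp (m * (z - 1))

lemma hasDerivAt_poissonPGF (m z : ℝ) :
    HasDerivAt (poissonPGF m) (m * poissonPGF m z) z := by
  have hlin : HasDerivAt (fun z : ℝ => m * (z - 1)) m z := by
    simpa using ((hasDerivAt_id z).sub_const 1).const_mul m
  have h := hlin.exp
  rw [mul_comm (exp _) m] at h
  exact h

section PoissonPGF

variable {m : ℝ}

lemma poissonPGF_le_one (hm : 0 ≤ m) {z : ℝ} (hz : z ≤ 1) : poissonPGF m z ≤ 1 :=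
  exp_le_one_iff.mpr (mul_nonpos_of_nonneg_of_nonpos hm (by linarith))

lemma poissonPGF_mul_exp_neg_le (hm : 0 ≤ m) {u v D : ℝ} (huv : u - v ≤ D) :
    poissonPGF m u * exp (-(m * D)) ≤ poissonPGF m v := by
  rw [poissonPGF, poissonPGF, ← exp_add, exp_le_exp]
  nlinarith

lemma mul_poissonPGF_sub_le (hm : 0 ≤ m) (ε : ℝ) {u v D q q' : ℝ} (hq' : 0 ≤ q')
    (hu : u ≤ 1) (huv : u - v ≤ D) :
    m * poissonPGF m u * q - exp ε * (m * poissonPGF m v * q')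
      ≤ m * max (q - exp (ε - m * D) * q') 0 := by
  have hexp : exp (ε - m * D) = exp ε * exp (-(m * D)) := by rw [sub_eq_add_neg, exp_add]
  have hφv := poissonPGF_mul_exp_neg_le hm huv
  calc m * poissonPGF m u * q - exp ε * (m * poissonPGF m v * q')
      ≤ m * poissonPGF m u * q - exp ε * (m * (poissonPGF m u * exp (-(m * D))) * q') := by
        gcongr
    _ = poissonPGF m u * (m * (q - exp (ε - m * D) * q')) := by rw [hexp]; ring
    _ ≤ poissonPGF m u * (m * max (q - exp (ε - m * D) * q') 0) := by
        gcongr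
        · exact (exp_pos _).le
        · exact le_max_left _ _
    _ ≤ m * max (q - exp (ε - m * D) * q') 0 :=
        mul_le_of_le_one_left (mul_nonneg hm (le_max_right _ _)) (poissonPGF_le_one hm hu)

lemma poissonPGF_increment_sub_le (hm : 0 ≤ m) (ε : ℝ) {D a q a' q' : ℝ} (hq' : 0 ≤ q')
    (hU : ∀ t ∈ Set.Icc (0 : ℝ) 1, a + t * q ≤ 1)
    (hUV : ∀ t ∈ Set.Icc (0 : ℝ) 1, a + t * q - (a' + t * q') ≤ D) :
    poissonPGF m (a + q) - poissonPGF m a - exp ε * (poissonPGF m (a' + q') - poissonPGF m a')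
      ≤ m * max (q - exp (ε - m * D) * q') 0 := by
  set g : ℝ → ℝ := fun t => poissonPGF m (a + t * q) - exp ε * poissonPGF m (a' + t * q')
  have hpath : ∀ b r t : ℝ, HasDerivAt (fun t => poissonPGF m (b + t * r))
      (m * poissonPGF m (b + t * r) * r) t := fun b r t =>
    (hasDerivAt_poissonPGF m _).comp t (by simpa using ((hasDerivAt_id t).mul_const r).const_add b)
  have hg : ∀ t, HasDerivAt g (m * poissonPGF m (a + t * q) * q
      - exp ε * (m * poissonPGF m (a' + t * q') * q')) t := fun t =>
    (hpath a q t).sub ((hpath a' q' t).const_mul _)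
  have hgd : Differentiable ℝ g := fun t => (hg t).differentiableAt
  have hmvt := (convex_Icc (0 : ℝ) 1).image_sub_le_mul_sub_of_deriv_le hgd.continuous.continuousOn
    hgd.differentiableOn (fun t ht => by
      rw [interior_Icc] at ht
      rw [(hg t).deriv]
      exact mul_poissonPGF_sub_le hm ε hq' (hU t (Set.Ioo_subset_Icc_self ht))
        (hUV t (Set.Ioo_subset_Icc_self ht)))
    0 (by simp) 1 (by simp) zero_le_one
  simp only [g, zero_mul, add_zero, one_mul, sub_zero, mul_one] at hmvt
  linarith

end PoissonPGF

section Cumulative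

variable {Y : Type*} [Fintype Y] [LinearOrder Y] {Q Q' : Y → ℝ}

lemma cumLE_eq_cumLT_add (Q : Y → ℝ) (y : Y) : cumLE Q y = cumLT Q y + Q y := by
  have h : univ.filter (fun z => z ≤ y) = insert y (univ.filter (fun z => z < y)) := by
    ext z
    simp [le_iff_lt_or_eq, or_comm]
  rw [cumLE, h, sum_insert (by simp), add_comm, cumLT]

lemma cumLT_add_mul_le_one (hQ : ∀ z, 0 ≤ Q z) (hQ_sum : ∑ z, Q z = 1) (y : Y) {t : ℝ}
    (ht : t ≤ 1) : cumLT Q y + t * Q y ≤ 1 := by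
  have hLE : cumLE Q y ≤ 1 :=
    hQ_sum ▸ sum_le_sum_of_subset_of_nonneg (filter_subset _ _) (fun z _ _ => hQ z)
  rw [cumLE_eq_cumLT_add] at hLE
  nlinarith [hQ y]

lemma sub_le_max_sub_exp_mul_add (s a b : ℝ) :
    a - b ≤ max (a - exp s * b) 0 + (exp s - 1) * b := by
  have := le_max_left (a - exp s * b) 0
  linarith

lemma cumLT_add_mul_sub_le (hQ' : ∀ z, 0 ≤ Q' z) (hQ'_sum : ∑ z, Q' z = 1) {s d : ℝ}
    (hs : 0 ≤ s) (hd : ∑ z, max (Q z - exp s * Q' z) 0 ≤ d) (y : Y) {t : ℝ}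
    (ht : t ∈ Set.Icc (0 : ℝ) 1) :
    cumLT Q y + t * Q y - (cumLT Q' y + t * Q' y) ≤ (exp s - 1) + d := by
  obtain ⟨ht0, ht1⟩ := ht
  set M : Y → ℝ := fun z => max (Q z - exp s * Q' z) 0
  have hM : ∀ z, 0 ≤ M z := fun z => le_max_right _ _
  have hbelow : cumLT Q y - cumLT Q' y
      ≤ ∑ z ∈ univ.filter (fun z => z < y), M z + (exp s - 1) * cumLT Q' y := by
    rw [cumLT, cumLT, ← sum_sub_distrib, mul_sum, ← sum_add_distrib]
    exact sum_le_sum fun z _ => sub_le_max_sub_exp_mul_add s _ _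
  have hat : t * (Q y - Q' y) ≤ M y + (exp s - 1) * (t * Q' y) := by
    nlinarith [sub_le_max_sub_exp_mul_add s (Q y) (Q' y), hM y]
  have hMsum : ∑ z ∈ univ.filter (fun z => z < y), M z + M y ≤ d := by
    rw [add_comm, ← sum_insert (by simp)]
    exact (sum_le_sum_of_subset_of_nonneg (subset_univ _) fun z _ _ => hM z).trans hd
  have hexp : (exp s - 1) * (cumLT Q' y + t * Q' y) ≤ exp s - 1 :=
    mul_le_of_le_one_right (by linarith [add_one_le_exp s])
      (cumLT_add_mul_le_one hQ' hQ'_sum y ht1)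
  linarith

end Cumulative

theorem private_selection_poisson_bound_general
    {Y : Type*} [Fintype Y] [LinearOrder Y]
    (Q Q' : Y → ℝ)
    (hQ_pos : ∀ y, 0 < Q y) (hQ_sum : ∑ y, Q y = 1)
    (hQ'_pos : ∀ y, 0 < Q' y) (hQ'_sum : ∑ y, Q' y = 1)
    (m : ℝ) (hm : 0 < m)
    (A A' : Y → ℝ)
    (hA : ∀ y, A y = Real.exp (m * (cumLE Q y - 1)) - Real.exp (m * (cumLT Q y - 1)))
    (hA' : ∀ y, A' y = Real.exp (m * (cumLE Q' y - 1)) - Real.exp (m * (cumLT Q' y - 1)))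
    (δ : ℝ → ℝ)
    (hδ : ∀ s, ∑ y, max (Q y - Real.exp s * Q' y) 0 ≤ δ s)
    (ε : ℝ) (ε₁ : ℝ) (hε₁ : 0 ≤ ε₁) :
    ∑ y, max (A y - Real.exp ε * A' y) 0
      ≤ m * δ (ε - m * (Real.exp ε₁ - 1) - m * δ ε₁) := by
  have hεhat : ε - m * (exp ε₁ - 1) - m * δ ε₁ = ε - m * ((exp ε₁ - 1) + δ ε₁) := by ring
  have hterm : ∀ y, A y - exp ε * A' y
      ≤ m * max (Q y - exp (ε - m * (exp ε₁ - 1) - m * δ ε₁) * Q' y) 0 := by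
    intro y
    rw [hA, hA', cumLE_eq_cumLT_add Q, cumLE_eq_cumLT_add Q', hεhat]
    exact poissonPGF_increment_sub_le hm.le ε (hQ'_pos y).le
      (fun t ht => cumLT_add_mul_le_one (fun z => (hQ_pos z).le) hQ_sum y ht.2)
      fun t ht => cumLT_add_mul_sub_le (fun z => (hQ'_pos z).le) hQ'_sum hε₁ (hδ ε₁) y ht
  calc ∑ y, max (A y - exp ε * A' y) 0
      ≤ ∑ y, m * max (Q y - exp (ε - m * (exp ε₁ - 1) - m * δ ε₁) * Q' y) 0 :=
        sum_le_sum fun y _ => max_le (hterm y) (mul_nonneg hm.le (le_max_right _ _))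
    _ ≤ m * δ (ε - m * (exp ε₁ - 1) - m * δ ε₁) := by
        rw [← mul_sum]
        exact mul_le_mul_of_nonneg_left (hδ _) hm.le

/-- Corollary 5.8: hockey-stick privacy-profile bound for private selection with a
Poisson distributed number of candidates `K ∼ Poisson(m)`. -/
theorem private_selection_poisson_bound
    {Y : Type*} [Fintype Y] [LinearOrder Y]
    (Q Q' : Y → ℝ)
    (hQ_pos : ∀ y, 0 < Q y) (hQ_le : ∀ y, Q y ≤ 1) (hQ_sum : ∑ y, Q y = 1)
    (hQ'_pos : ∀ y, 0 < Q' y) (hQ'_le : ∀ y, Q' y ≤ 1) (hQ'_sum : ∑ y, Q' y = 1)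
    (m : ℝ) (hm : 0 < m)
    (A A' : Y → ℝ)
    (hA : ∀ y, A y = Real.exp (m * (cumLE Q y - 1)) - Real.exp (m * (cumLT Q y - 1)))
    (hA' : ∀ y, A' y = Real.exp (m * (cumLE Q' y - 1)) - Real.exp (m * (cumLT Q' y - 1)))
    (δ : ℝ → ℝ) (hδ_nonneg : ∀ s, 0 ≤ δ s)
    (hδ : ∀ s, ∑ y, max (Q y - Real.exp s * Q' y) 0 ≤ δ s)
    (hδ' : ∀ s, ∑ y, max (Q' y - Real.exp s * Q y) 0 ≤ δ s)
    (ε : ℝ) (hε : 0 < ε) (ε₁ : ℝ) (hε₁ : 0 ≤ ε₁) :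
    ∑ y, max (A y - Real.exp ε * A' y) 0
      ≤ m * δ (ε - m * (Real.exp ε₁ - 1) - m * δ ε₁) :=
  private_selection_poisson_bound_general Q Q' hQ_pos hQ_sum hQ'_pos hQ'_sum m hm A A' hA hA' δ hδ ε
    ε₁ hε₁
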